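/- arXiv:1402.7342 — 2 statements merged into one kernel-verified Lean document; each statement's English description precedes it below -/
import Mathlib

section
/- For all c, c' ∈ F, one has 2 · |c·c'|_X ≤ L_{YX}(c) · L_{XY}(c'). -/
/-- The word length of `g` with respect to `S ∪ S⁻¹`. -/
noncomputable def wordLength {G : Type*} [Group G] (S : Set G) (g : G) : ℕ :=
  sInf {m : ℕ | ∃ f : Fin m → G, (∀ i, f i ∈ S ∨ (f i)⁻¹ ∈ S) ∧ g = (List.ofFn f).prod}

/-- `X : ι → G` indexes a free basis of the group `G`. -/
def IsFreeBasis {G : Type*} [Group G] {ι : Type*} (X : ι → G) : Prop :=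
  Function.Bijective (FreeGroup.lift X : FreeGroup ι →* G)

/-!
Put `g = c * c'`. Conjugation by `c'` is a homomorphism sending each `y ∈ Y` to an element of
`X`-length at most `L_{XY}(c')`, hence it is `L_{XY}(c')`-Lipschitz from the `Y`-word metric to the
`X`-word metric; applied to `c⁻¹ x c` this gives `|g⁻¹ x g|_X ≤ L_{YX}(c) ⬝ L_{XY}(c')` for every
`x ∈ X`. Conversely, since the rank is at least two, some `x ∈ X` differs from the first letter of
the reduced `X`-word of `g`, and then `g⁻¹ x g` is reduced, of length `2 |g|_X + 1`.
-/

open scoped Pointwise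

theorem apply_le_mul_of_mem_pow {M : Type*} [Monoid M] {ℓ : M → ℕ} (hone : ℓ 1 = 0)
    (hmul : ∀ x y, ℓ (x * y) ≤ ℓ x + ℓ y) {U : Set M} {B : ℕ} (hU : ∀ u ∈ U, ℓ u ≤ B) :
    ∀ {m : ℕ} {x : M}, x ∈ U ^ m → ℓ x ≤ m * B
  | 0, x, hx => by rw [Set.mem_one.mp hx, hone, zero_mul]
  | m + 1, _, hx => by
    obtain ⟨y, hy, u, hu, rfl⟩ := Set.mem_mul.mp (pow_succ U m ▸ hx)
    calc ℓ (y * u) ≤ ℓ y + ℓ u := hmul y u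
      _ ≤ m * B + B := add_le_add (apply_le_mul_of_mem_pow hone hmul hU hy) (hU u hu)
      _ = (m + 1) * B := by ring

section WordLength

variable {G H : Type*} [Group G] [Group H] {S : Set G} {g h : G}

theorem wordLength_eq_sInf (S : Set G) (g : G) :
    wordLength S g = sInf {m | g ∈ (S ∪ S⁻¹) ^ m} := by
  rw [wordLength]
  congr 1
  ext m
  simp only [Set.mem_ofPred_eq, Set.mem_pow]
  constructor
  · rintro ⟨f, hf, rfl⟩
    exact ⟨fun i => ⟨f i, hf i⟩, rfl⟩
  · rintro ⟨f, rfl⟩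
    exact ⟨fun i => f i, fun i => (f i).2, rfl⟩

theorem wordLength_le_of_mem_pow {m : ℕ} (hg : g ∈ (S ∪ S⁻¹) ^ m) : wordLength S g ≤ m := by
  rw [wordLength_eq_sInf]
  exact Nat.sInf_le hg

theorem wordLength_le_one (hg : g ∈ S) : wordLength S g ≤ 1 :=
  wordLength_le_of_mem_pow (m := 1) (by simp [hg])

theorem wordLength_one (S : Set G) : wordLength S (1 : G) = 0 :=
  Nat.le_zero.mp (wordLength_le_of_mem_pow (m := 0) (by simp))

theorem wordLength_inv (S : Set G) (g : G) : wordLength S g⁻¹ = wordLength S g := by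
  simp only [wordLength_eq_sInf, ← Set.inv_mem_inv (a := g⁻¹), inv_inv, ← inv_pow, Set.union_inv,
    Set.union_comm S⁻¹]

theorem exists_mem_pow_of_mem_closure (hg : g ∈ Subgroup.closure S) :
    ∃ m, g ∈ (S ∪ S⁻¹) ^ m := by
  induction hg using Subgroup.closure_induction with
  | mem s hs => exact ⟨1, by simp [hs]⟩
  | one => exact ⟨0, by simp⟩
  | mul g h _ _ hg hh =>
    obtain ⟨a, ha⟩ := hg
    obtain ⟨b, hb⟩ := hh
    exact ⟨a + b, pow_add (S ∪ S⁻¹) a b ▸ Set.mul_mem_mul ha hb⟩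
  | inv g _ hg =>
    obtain ⟨a, ha⟩ := hg
    refine ⟨a, ?_⟩
    rw [← Set.inv_mem_inv, ← inv_pow, Set.union_inv, inv_inv, Set.union_comm, inv_inv]
    exact ha

theorem mem_pow_wordLength (hg : g ∈ Subgroup.closure S) :
    g ∈ (S ∪ S⁻¹) ^ wordLength S g := by
  rw [wordLength_eq_sInf]
  exact Nat.sInf_mem (exists_mem_pow_of_mem_closure hg)

theorem wordLength_mul_le (hg : g ∈ Subgroup.closure S) (hh : h ∈ Subgroup.closure S) :
    wordLength S (g * h) ≤ wordLength S g + wordLength S h :=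
  wordLength_le_of_mem_pow <|
    pow_add (S ∪ S⁻¹) _ _ ▸ Set.mul_mem_mul (mem_pow_wordLength hg) (mem_pow_wordLength hh)

theorem wordLength_map_le {T : Set H} (hT : Subgroup.closure T = ⊤) (φ : G →* H) {B : ℕ}
    (hB : ∀ s ∈ S, wordLength T (φ s) ≤ B) (hg : g ∈ Subgroup.closure S) :
    wordLength T (φ g) ≤ wordLength S g * B := by
  have hφ : φ g ∈ (φ '' (S ∪ S⁻¹)) ^ wordLength S g :=
    Set.image_pow φ _ _ ▸ Set.mem_image_of_mem φ (mem_pow_wordLength hg)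
  refine apply_le_mul_of_mem_pow (wordLength_one T)
    (fun x y => wordLength_mul_le (hT ▸ Subgroup.mem_top x) (hT ▸ Subgroup.mem_top y)) ?_ hφ
  rintro _ ⟨s, hs | hs, rfl⟩
  · exact hB s hs
  · simpa [wordLength_inv] using hB s⁻¹ hs

end WordLength

namespace FreeGroup

variable {α : Type*}

theorem mk_mem_pow_length (L : List (α × Bool)) :
    mk L ∈ (Set.range of ∪ (Set.range of)⁻¹) ^ L.length := by
  induction L with
  | nil => exact Set.mem_one.mpr rfl
  | cons a L ih =>
    rw [List.length_cons, pow_succ', ← List.singleton_append, ← mul_mk]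
    refine Set.mul_mem_mul ?_ ih
    obtain ⟨x, _ | _⟩ := a
    · exact Or.inr ⟨x, by rw [inv_mk]; rfl⟩
    · exact Or.inl ⟨x, rfl⟩

variable [DecidableEq α] {L : List (α × Bool)}

theorem wordLength_range_of (w : FreeGroup α) : wordLength (Set.range of) w = w.norm := by
  refine le_antisymm ?_ ?_
  · simpa only [mk_toWord, norm] using wordLength_le_of_mem_pow (mk_mem_pow_length w.toWord)
  · refine (apply_le_mul_of_mem_pow norm_one norm_mul_le ?_ (mem_pow_wordLength ?_)).trans_eq
      (mul_one _)
    · rintro _ (⟨a, rfl⟩ | ⟨a, ha⟩)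
      · exact (norm_of a).le
      · rw [← norm_inv_eq, ← ha, norm_of]
    · simp

theorem IsReduced.invRev (hL : IsReduced L) : IsReduced (invRev L) := by
  simpa only [toWord_inv, toWord_mk, hL.reduce_eq] using isReduced_toWord (x := (mk L)⁻¹)

theorem IsReduced.norm_mk (hL : IsReduced L) : (mk L).norm = L.length := by
  rw [norm, toWord_mk, hL.reduce_eq]

/-- Choosing `a` different from the first letter of `w`, the word `w⁻¹ a w` is reduced. -/
theorem exists_norm_inv_mul_of_mul_eq [Nontrivial α] (w : FreeGroup α) :
    ∃ a, (w⁻¹ * of a * w).norm = 2 * w.norm + 1 := by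
  obtain ⟨b, hb⟩ : ∃ b : α, ∀ p ∈ w.toWord.head?, b ≠ p.1 := by
    cases w.toWord with
    | nil => exact ⟨Classical.arbitrary α, by simp⟩
    | cons p _ => exact (exists_ne p.1).imp fun b hb => by simpa using hb
  have hcons : ∀ β : Bool, IsReduced ((b, β) :: w.toWord) := by
    intro β
    cases h : w.toWord with
    | nil => exact .singleton
    | cons p W =>
      rw [h] at hb
      exact isReduced_cons_cons.mpr ⟨fun e => absurd e (hb p rfl), h ▸ isReduced_toWord⟩
  have hred : IsReduced (invRev w.toWord ++ [(b, true)] ++ w.toWord) := by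
    refine IsReduced.append_overlap ?_ (hcons true) (List.cons_ne_nil _ _)
    simpa [invRev] using (hcons false).invRev
  have hmk : w⁻¹ * of b * w = mk (invRev w.toWord ++ [(b, true)] ++ w.toWord) := by
    rw [← mul_mk, ← mul_mk, ← inv_mk, mk_toWord]
    rfl
  refine ⟨b, ?_⟩
  rw [hmk, hred.norm_mk, List.length_append, List.length_append, invRev_length,
    List.length_singleton, norm]
  ring

end FreeGroup

namespace IsFreeBasis

variable {G ι : Type*} [Group G] {X : ι → G}

theorem closure_range_eq_top (hX : IsFreeBasis X) : Subgroup.closure (Set.range X) = ⊤ :=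
  FreeGroup.lift_surjective_iff_closure_range_eq_top.mp hX.2

theorem wordLength_lift [DecidableEq ι] (hX : IsFreeBasis X) (w : FreeGroup ι) :
    wordLength (Set.range X) (FreeGroup.lift X w) = w.norm := by
  rw [← FreeGroup.wordLength_range_of]
  let e := MulEquiv.ofBijective (FreeGroup.lift X) hX
  refine le_antisymm ?_ ?_
  · refine (wordLength_map_le hX.closure_range_eq_top _ ?_ (by simp)).trans_eq (mul_one _)
    rintro _ ⟨i, rfl⟩
    exact wordLength_le_one ⟨i, (FreeGroup.lift_apply_of).symm⟩
  · have h := wordLength_map_le (FreeGroup.closure_range_of ι) e.symm.toMonoidHom (B := 1) ?_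
      (hX.closure_range_eq_top ▸ Subgroup.mem_top (e w))
    · simp only [MulEquiv.toMonoidHom_eq_coe, MonoidHom.coe_coe, e.symm_apply_apply, mul_one] at h
      exact h
    rintro _ ⟨i, rfl⟩
    have hi : e.symm (X i) = FreeGroup.of i := e.symm_apply_eq.mpr FreeGroup.lift_apply_of.symm
    exact wordLength_le_one ⟨i, hi.symm⟩

end IsFreeBasis

/-- The displacement bound `2⋅|c⋅c'|_X ≤ L_{YX}(c) ⬝ L_{XY}(c')`, where
`L_{YX}(c) = max_{x ∈ X} |c⁻¹ x c|_Y` and `L_{XY}(c') = max_{y ∈ Y} |c'⁻¹ y c'|_X`. -/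
theorem two_mul_wordLength_le {F : Type*} [Group F] {n : ℕ} (hn : 2 ≤ n)
    (X Y : Fin n → F) (hX : IsFreeBasis X) (hY : IsFreeBasis Y)
    (c c' : F) :
    2 * wordLength (Set.range X) (c * c') ≤
      (Finset.univ.sup fun i => wordLength (Set.range Y) (c⁻¹ * X i * c)) *
        (Finset.univ.sup fun i => wordLength (Set.range X) (c'⁻¹ * Y i * c')) := by
  classical
  have : Nontrivial (Fin n) := Fin.nontrivial_iff_two_le.mpr hn
  obtain ⟨w, hw⟩ := hX.2 (c * c')
  obtain ⟨i, hi⟩ := FreeGroup.exists_norm_inv_mul_of_mul_eq w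
  have hconj : (c * c')⁻¹ * X i * (c * c') = MulAut.conj c'⁻¹ (c⁻¹ * X i * c) := by
    simp only [MulAut.conj_apply, inv_inv]
    group
  have hlift : FreeGroup.lift X (w⁻¹ * FreeGroup.of i * w) = (c * c')⁻¹ * X i * (c * c') := by
    simp [hw]
  calc 2 * wordLength (Set.range X) (c * c') = 2 * w.norm := by rw [← hw, hX.wordLength_lift]
    _ ≤ (w⁻¹ * FreeGroup.of i * w).norm := by omega
    _ = wordLength (Set.range X) (MulAut.conj c'⁻¹ (c⁻¹ * X i * c)) := by
      rw [← hconj, ← hlift, hX.wordLength_lift]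
    _ ≤ wordLength (Set.range Y) (c⁻¹ * X i * c) *
          Finset.univ.sup fun j => wordLength (Set.range X) (c'⁻¹ * Y j * c') := by
      refine wordLength_map_le hX.closure_range_eq_top (MulAut.conj c'⁻¹).toMonoidHom ?_
        (hY.closure_range_eq_top ▸ Subgroup.mem_top _)
      rintro _ ⟨j, rfl⟩
      simpa using Finset.le_sup (f := fun j => wordLength (Set.range X) (c'⁻¹ * Y j * c'))
        (Finset.mem_univ j)
    _ ≤ _ := Nat.mul_le_mul_right _ (Finset.le_sup (f := fun j =>
          wordLength (Set.range Y) (c⁻¹ * X j * c)) (Finset.mem_univ i))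
end

section
/- For every c ∈ F, every v ∈ F, and every y ∈ Y, the set of pairs (u, x) ∈ F × X such that the oriented edge (v, vy) lies on the Y-geodesic from uc to uxc or the oriented edge (vy, v) lies on the Y-geodesic from uc to uxc, is finite of cardinality at most n · L_{YX}(c). -/
/-- `L_{YX}(c) = max_{x ∈ X} |c⁻¹ x c|_Y`, the length of the morphism between unit roses
determined on vertices by `u ↦ u⋅c`. -/
noncomputable def morphismLength {F : Type*} [Group F] {n : ℕ}
    (X Y : Fin n → F) (c : F) : ℕ :=
  Finset.univ.sup fun i => wordLength (Set.range Y) (c⁻¹ * X i * c)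

/-- The oriented edge `(v, v⋅y)` of the Cayley tree of `(F, S)` lies on the
`S`-geodesic from `a` to `b`. -/
noncomputable def liesOnGeodesic {F : Type*} [Group F] (S : Set F) (v y a b : F) : Prop :=
  wordLength S (a⁻¹ * v) + 1 + wordLength S ((v * y)⁻¹ * b) = wordLength S (a⁻¹ * b)

/-!
Identify `F` with the free group on `Y`. The image of the edge `(u, u xᵢ)` is the geodesic from
`u c` to `u xᵢ c`, which spells the reduced word `Wᵢ` of `c⁻¹ xᵢ c`; if it crosses the edge
`(v, v y^{±1})`, then the reduced word of `(u c)⁻¹ v` followed by the letter `y^{±1}` is a prefix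
of `Wᵢ`. Hence such an edge is determined by `i` and by the position `|(u c)⁻¹ v|` of an
occurrence of `y^{±1}` in `Wᵢ`, the letter found there fixes the orientation, and there are at
most `∑ᵢ |Wᵢ| ≤ n L_{YX}(c)` positions.
-/

open FreeGroup

namespace FreeGroup

variable {ι : Type*} [DecidableEq ι]

theorem toWord_mul_of_norm_add_eq {a b : FreeGroup ι} (h : a.norm + b.norm = (a * b).norm) :
    (a * b).toWord = a.toWord ++ b.toWord :=
  (toWord_mul_sublist a b).eq_of_length (by simpa [norm] using h.symm)

theorem toWord_append_singleton_prefix {σ ω : FreeGroup ι} {ℓ : ι × Bool}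
    (h : σ.norm + 1 + ((mk [ℓ])⁻¹ * σ⁻¹ * ω).norm = ω.norm) :
    σ.toWord ++ [ℓ] <+: ω.toWord := by
  set τ := σ * mk [ℓ]
  set ρ := τ⁻¹ * ω
  have hρ : (mk [ℓ])⁻¹ * σ⁻¹ * ω = ρ := by simp [ρ, τ, mul_assoc]
  have hτρ : τ * ρ = ω := mul_inv_cancel_left τ ω
  have hℓ : (mk [ℓ]).toWord = [ℓ] := by rw [toWord_mk, reduce_singleton]
  have hℓn : (mk [ℓ]).norm = 1 := by simp [norm, hℓ]
  have hτ : τ.norm ≤ σ.norm + 1 := hℓn ▸ norm_mul_le σ _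
  have hω : ω.norm ≤ τ.norm + ρ.norm := hτρ ▸ norm_mul_le τ ρ
  rw [hρ] at h
  -- `h` forces equality in both triangle inequalities, so neither product cancels letters.
  have hστ : τ.toWord = σ.toWord ++ [ℓ] := by
    rw [toWord_mul_of_norm_add_eq (show σ.norm + _ = τ.norm by omega), hℓ]
  refine ⟨ρ.toWord, ?_⟩
  rw [← hστ, ← toWord_mul_of_norm_add_eq (by rw [hτρ]; omega), hτρ]

variable {κ : Type*}

def letterPositions (W : κ → FreeGroup ι) (ℓ : ι × Bool) : Set (κ × ℕ) :=
  {q | (W q.1).toWord[q.2]? = some ℓ}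

theorem letterPositions_subset [Fintype κ] {W : κ → FreeGroup ι} {L : ℕ}
    (hW : ∀ i, (W i).norm ≤ L) (ℓ : ι × Bool) :
    letterPositions W ℓ ⊆ ↑(Finset.univ ×ˢ Finset.range L : Finset (κ × ℕ)) := by
  intro q hq
  have := (List.getElem?_eq_some_iff.1 hq).1
  simpa using this.trans_le (hW q.1)

theorem disjoint_letterPositions (W : κ → FreeGroup ι) {ℓ ℓ' : ι × Bool}
    (h : ℓ ≠ ℓ') : Disjoint (letterPositions W ℓ) (letterPositions W ℓ') :=
  Set.disjoint_left.2 fun _ h₁ h₂ => h (Option.some_injective _ (h₁.symm.trans h₂))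

end FreeGroup

section FreeBasis

variable {G ι κ : Type*} [Group G] {Y : ι → G}

def preimageEdges (S : Set G) (X : κ → G) (c v y : G) : Set (G × κ) :=
  {p | liesOnGeodesic S v y (p.1 * c) (p.1 * X p.2 * c)}

theorem wordLength_lift_eq_norm [DecidableEq ι] (hY : Function.Injective (lift Y))
    (w : FreeGroup ι) : wordLength (Set.range Y) (lift Y w) = w.norm := by
  set letter : ι × Bool → G := fun x => bif x.2 then Y x.1 else (Y x.1)⁻¹
  have hletter : ∀ g, (g ∈ Set.range Y ∨ g⁻¹ ∈ Set.range Y) ↔ ∃ x, letter x = g := by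
    intro g
    constructor
    · rintro (⟨i, rfl⟩ | ⟨i, hi⟩)
      · exact ⟨(i, true), rfl⟩
      · exact ⟨(i, false), by simp [letter, hi]⟩
    · rintro ⟨⟨i, _ | _⟩, rfl⟩ <;> simp [letter]
  have hmem : w.toWord.length ∈ {m : ℕ | ∃ f : Fin m → G,
      (∀ i, f i ∈ Set.range Y ∨ (f i)⁻¹ ∈ Set.range Y) ∧ lift Y w = (List.ofFn f).prod} := by
    refine ⟨letter ∘ w.toWord.get, fun j => (hletter _).2 ⟨_, rfl⟩, ?_⟩
    rw [← List.map_ofFn, List.ofFn_get, ← lift_mk, mk_toWord]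
  refine le_antisymm (Nat.sInf_le hmem) (le_csInf ⟨_, hmem⟩ ?_)
  rintro m ⟨f, hf, hw⟩
  choose x hx using fun j => (hletter (f j)).1 (hf j)
  have hx' : letter ∘ x = f := funext hx
  have hw' : w = mk (List.ofFn x) := hY (by rw [hw, lift_mk, List.map_ofFn, ← hx'])
  simpa [hw'] using norm_mk_le (L₁ := List.ofFn x)

namespace IsFreeBasis

noncomputable def mulEquiv (hY : IsFreeBasis Y) : FreeGroup ι ≃* G := MulEquiv.ofBijective _ hY

@[simp]
theorem mulEquiv_apply (hY : IsFreeBasis Y) (w : FreeGroup ι) : hY.mulEquiv w = lift Y w := rfl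

variable [DecidableEq ι] (hY : IsFreeBasis Y)

theorem wordLength_eq_norm (g : G) : wordLength (Set.range Y) g = (hY.mulEquiv.symm g).norm := by
  conv_lhs => rw [← hY.mulEquiv.apply_symm_apply g]
  exact wordLength_lift_eq_norm hY.1 _

theorem toWord_append_singleton_prefix {v a b : G} {ℓ : ι × Bool}
    (h : liesOnGeodesic (Set.range Y) v (lift Y (mk [ℓ])) a b) :
    (hY.mulEquiv.symm (a⁻¹ * v)).toWord ++ [ℓ] <+: (hY.mulEquiv.symm (a⁻¹ * b)).toWord := by
  apply FreeGroup.toWord_append_singleton_prefix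
  unfold liesOnGeodesic at h
  simp only [hY.wordLength_eq_norm] at h
  convert h using 4
  rw [eq_comm, MulEquiv.symm_apply_eq]
  simp only [_root_.map_mul, _root_.map_inv, MulEquiv.apply_symm_apply, mulEquiv_apply]
  group

theorem preimageEdges_finite_and_ncard_le (X : κ → G) (c v : G) (ℓ : ι × Bool)
    (hA : (letterPositions (fun i => hY.mulEquiv.symm (c⁻¹ * X i * c)) ℓ).Finite) :
    (preimageEdges (Set.range Y) X c v (lift Y (mk [ℓ]))).Finite ∧
      (preimageEdges (Set.range Y) X c v (lift Y (mk [ℓ]))).ncard ≤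
        (letterPositions (fun i => hY.mulEquiv.symm (c⁻¹ * X i * c)) ℓ).ncard := by
  set e := hY.mulEquiv
  set position : G × κ → κ × ℕ := fun p => (p.2, (e.symm ((p.1 * c)⁻¹ * v)).norm)
  have hprefix : ∀ p ∈ preimageEdges (Set.range Y) X c v (lift Y (mk [ℓ])),
      (e.symm ((p.1 * c)⁻¹ * v)).toWord ++ [ℓ] <+: (e.symm (c⁻¹ * X p.2 * c)).toWord := by
    intro p hp
    simpa [mul_assoc] using hY.toWord_append_singleton_prefix hp
  have hmaps : Set.MapsTo position (preimageEdges (Set.range Y) X c v (lift Y (mk [ℓ])))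
      (letterPositions (fun i => e.symm (c⁻¹ * X i * c)) ℓ) := by
    intro p hp
    obtain ⟨t, ht⟩ := hprefix p hp
    change (e.symm (c⁻¹ * X p.2 * c)).toWord[(e.symm ((p.1 * c)⁻¹ * v)).toWord.length]? = some ℓ
    rw [← ht]
    simp
  have hinj : Set.InjOn position (preimageEdges (Set.range Y) X c v (lift Y (mk [ℓ]))) := by
    rintro ⟨u, i⟩ hu ⟨u', i'⟩ hu' hpos
    simp only [position, Prod.mk.injEq] at hpos
    obtain ⟨rfl, hlen⟩ := hpos
    obtain ⟨t, ht⟩ := hprefix _ hu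
    obtain ⟨t', ht'⟩ := hprefix _ hu'
    have hlen' : ((e.symm ((u * c)⁻¹ * v)).toWord ++ [ℓ]).length =
        ((e.symm ((u' * c)⁻¹ * v)).toWord ++ [ℓ]).length := by
      simp only [List.length_append]; exact congrArg (· + 1) hlen
    have hword := List.append_cancel_right (List.append_inj (ht.trans ht'.symm) hlen').1
    have hvertex := e.symm.injective (FreeGroup.toWord_injective hword)
    simpa using hvertex
  exact ⟨hA.of_injOn hmaps hinj, Set.ncard_le_ncard_of_injOn position hmaps hinj hA⟩

end IsFreeBasis

end FreeBasis

theorem card_preimage_edges_le_general {F : Type*} [Group F] {n : ℕ}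
    (X Y : Fin n → F) (hY : IsFreeBasis Y)
    (c v : F) (y : F) (hy : y ∈ Set.range Y) :
    {p : F × Fin n |
        liesOnGeodesic (Set.range Y) v y (p.1 * c) (p.1 * X p.2 * c) ∨
        liesOnGeodesic (Set.range Y) (v * y) y⁻¹ (p.1 * c) (p.1 * X p.2 * c)}.Finite ∧
      {p : F × Fin n |
        liesOnGeodesic (Set.range Y) v y (p.1 * c) (p.1 * X p.2 * c) ∨
        liesOnGeodesic (Set.range Y) (v * y) y⁻¹ (p.1 * c) (p.1 * X p.2 * c)}.ncard ≤
      n * morphismLength X Y c := by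
  obtain ⟨a, rfl⟩ := hy
  set W := fun i => hY.mulEquiv.symm (c⁻¹ * X i * c)
  set B : Finset (Fin n × ℕ) := Finset.univ ×ˢ Finset.range (morphismLength X Y c)
  have hW : ∀ i, (W i).norm ≤ morphismLength X Y c := fun i =>
    (hY.wordLength_eq_norm _).symm.trans_le
      (Finset.le_sup (f := fun i => wordLength (Set.range Y) (c⁻¹ * X i * c)) (Finset.mem_univ i))
  have hB : ∀ ℓ, letterPositions W ℓ ⊆ B := letterPositions_subset hW
  have hA : ∀ ℓ, (letterPositions W ℓ).Finite := fun ℓ => B.finite_toSet.subset (hB ℓ)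
  obtain ⟨hfin₁, hcard₁⟩ := hY.preimageEdges_finite_and_ncard_le X c v (a, true) (hA _)
  obtain ⟨hfin₂, hcard₂⟩ := hY.preimageEdges_finite_and_ncard_le X c (v * Y a) (a, false) (hA _)
  simp only [lift_mk, List.map_cons, List.map_nil, List.prod_singleton, cond_true,
    cond_false] at hfin₁ hcard₁ hfin₂ hcard₂
  change (preimageEdges _ X c v (Y a) ∪ preimageEdges _ X c (v * Y a) (Y a)⁻¹).Finite ∧
    (preimageEdges _ X c v (Y a) ∪ preimageEdges _ X c (v * Y a) (Y a)⁻¹).ncard ≤ _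
  refine ⟨hfin₁.union hfin₂, ?_⟩
  calc _ ≤ _ := Set.ncard_union_le _ _
    _ ≤ _ := add_le_add hcard₁ hcard₂
    _ = (letterPositions W (a, true) ∪ letterPositions W (a, false)).ncard :=
      (Set.ncard_union_eq (disjoint_letterPositions W (by simp)) (hA _) (hA _)).symm
    _ ≤ (B : Set (Fin n × ℕ)).ncard := Set.ncard_le_ncard (Set.union_subset (hB _) (hB _))
    _ = n * morphismLength X Y c := by simp [B]

/-- A point interior to an edge of the target has at most `rk(F)⋅ℓ(f)` preimages under the
morphism determined on vertices by `u ↦ u⋅c`: the set of edges `(u, u⋅x)` of the source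
Cayley tree whose image geodesic traverses the edge `{v, v⋅y}` has at most
`n ⋅ L_{YX}(c)` elements. -/
theorem card_preimage_edges_le {F : Type*} [Group F] {n : ℕ} (hn : 2 ≤ n)
    (X Y : Fin n → F) (hX : IsFreeBasis X) (hY : IsFreeBasis Y)
    (c v : F) (y : F) (hy : y ∈ Set.range Y) :
    {p : F × Fin n |
        liesOnGeodesic (Set.range Y) v y (p.1 * c) (p.1 * X p.2 * c) ∨
        liesOnGeodesic (Set.range Y) (v * y) y⁻¹ (p.1 * c) (p.1 * X p.2 * c)}.Finite ∧
      {p : F × Fin n |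
        liesOnGeodesic (Set.range Y) v y (p.1 * c) (p.1 * X p.2 * c) ∨
        liesOnGeodesic (Set.range Y) (v * y) y⁻¹ (p.1 * c) (p.1 * X p.2 * c)}.ncard ≤
      n * morphismLength X Y c :=
  card_preimage_edges_le_general X Y hY c v y hy
end
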